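/- arXiv:1211.1465 — 4 statements merged into one kernel-verified Lean document; each statement's English description precedes it below -/
import Mathlib

section
/- Let μ₁, μ₂ be finite Borel measures on [0,1]. If ∫_{[0,1]} x/((1-t)x + t) dμ₁(t) = ∫_{[0,1]} x/((1-t)x + t) dμ₂(t) for all x > 0, then μ₁ = μ₂. -/
/-!
Substituting `x = (1 + u)⁻¹` turns the kernel `x / ((1 - t) x + t)` into `(1 + t u)⁻¹`, so the
hypothesis says that the Stieltjes-type transforms `u ↦ ∫ (1 + t u)⁻¹ dμᵢ(t)` agree for `u > -1`.
Expanding in a geometric series, such a transform is analytic at `0` with Taylor coefficients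
`(-1)ⁿ ∫ tⁿ dμᵢ`, so by uniqueness of power series the two measures have the same moments.
By Weierstrass approximation, a finite measure on a compact subset of `ℝ` is determined by its
moments.
-/

open MeasureTheory Filter Topology

theorem ContinuousMap.integralCLM_toLp_apply {X : Type*} [TopologicalSpace X] [CompactSpace X]
    [MeasurableSpace X] [BorelSpace X] (μ : Measure X) [IsFiniteMeasure μ] (g : C(X, ℝ)) :
    (L1.integralCLM ∘L ContinuousMap.toLp 1 μ ℝ) g = ∫ x, g x ∂μ := by
  rw [ContinuousLinearMap.comp_apply, ← L1.integral_eq, L1.integral_eq_integral]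
  exact integral_congr_ae (ContinuousMap.coeFn_toLp μ g)

section Moments

variable {s : Set ℝ} [CompactSpace s] {μ ν : Measure s} [IsFiniteMeasure μ] [IsFiniteMeasure ν]

theorem integral_continuousMap_eq_of_forall_integral_pow_eq
    (h : ∀ n : ℕ, ∫ x, (x : ℝ) ^ n ∂μ = ∫ x, (x : ℝ) ^ n ∂ν) (g : C(s, ℝ)) :
    ∫ x, g x ∂μ = ∫ x, g x ∂ν := by
  set L : C(s, ℝ) →L[ℝ] ℝ :=
    L1.integralCLM ∘L ContinuousMap.toLp 1 μ ℝ - L1.integralCLM ∘L ContinuousMap.toLp 1 ν ℝ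
  have hL (g : C(s, ℝ)) : L g = ∫ x, g x ∂μ - ∫ x, g x ∂ν := by
    simp only [L, sub_apply, ContinuousMap.integralCLM_toLp_apply]
  have hpoly : Subalgebra.toSubmodule (polynomialFunctions s) ≤
      LinearMap.ker (L : C(s, ℝ) →ₗ[ℝ] ℝ) := by
    rw [polynomialFunctions.eq_adjoin_X, Algebra.adjoin_eq_span, Submodule.span_le,
      ← Submonoid.powers_eq_closure]
    rintro _ ⟨n, rfl⟩
    simp [hL, h n]
  have hg : g ∈ closure (polynomialFunctions s : Set C(s, ℝ)) := by
    rw [← Subalgebra.topologicalClosure_coe, polynomialFunctions.topologicalClosure]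
    trivial
  have hLg : L g = 0 := closure_minimal hpoly L.isClosed_ker hg
  rwa [hL, sub_eq_zero] at hLg

theorem MeasureTheory.Measure.ext_of_forall_integral_pow_eq
    (h : ∀ n : ℕ, ∫ x, (x : ℝ) ^ n ∂μ = ∫ x, (x : ℝ) ^ n ∂ν) : μ = ν :=
  ext_of_forall_integral_eq_of_IsFiniteMeasure fun f =>
    integral_continuousMap_eq_of_forall_integral_pow_eq h f.toContinuousMap

end Moments

section StieltjesSeries

variable {α : Type*} [MeasurableSpace α] {f : α → ℝ}

theorem hasFPowerSeriesAt_integral_inv_one_add_mul (μ : Measure α) [IsFiniteMeasure μ]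
    (hf : Measurable f) (hf_le : ∀ a, |f a| ≤ 1) :
    HasFPowerSeriesAt (fun u => ∫ a, (1 + f a * u)⁻¹ ∂μ)
      (FormalMultilinearSeries.ofScalars ℝ fun n => (-1) ^ n * ∫ a, f a ^ n ∂μ) 0 := by
  rw [hasFPowerSeriesAt_iff]
  filter_upwards [Metric.ball_mem_nhds (0 : ℝ) one_pos] with u hu
  rw [mem_ball_zero_iff, Real.norm_eq_abs] at hu
  have hgeom (a : α) : HasSum (fun n => (-u * f a) ^ n) (1 + f a * u)⁻¹ := by
    have hlt : ‖-u * f a‖ < 1 := by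
      rw [Real.norm_eq_abs, abs_mul, abs_neg]
      nlinarith [abs_nonneg u, abs_nonneg (f a), hf_le a]
    rw [show 1 + f a * u = 1 - -u * f a by ring]
    exact hasSum_geometric_of_norm_lt_one hlt
  have hsum := hasSum_integral_of_dominated_convergence (μ := μ)
    (F := fun n a => (-u * f a) ^ n) (bound := fun n _ => |u| ^ n)
    (fun n => ((measurable_const.mul hf).pow_const n).aestronglyMeasurable)
    (fun n => ae_of_all _ fun a => by
      rw [Real.norm_eq_abs, abs_pow, abs_mul, abs_neg]
      exact pow_le_pow_left₀ (by positivity)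
        (mul_le_of_le_one_right (abs_nonneg u) (hf_le a)) n)
    (ae_of_all _ fun _ => summable_geometric_of_lt_one (abs_nonneg u) hu)
    (integrable_const _) (ae_of_all _ hgeom)
  convert hsum using 2 with n
  · simp only [FormalMultilinearSeries.coeff_ofScalars, smul_eq_mul, mul_pow,
      ← integral_const_mul]
    congr 1 with a
    ring
  · simp

theorem integral_pow_eq_of_integral_inv_one_add_mul_eq {μ ν : Measure α}
    [IsFiniteMeasure μ] [IsFiniteMeasure ν] (hf : Measurable f) (hf_le : ∀ a, |f a| ≤ 1)
    (h : ∀ᶠ u in 𝓝 0, ∫ a, (1 + f a * u)⁻¹ ∂μ = ∫ a, (1 + f a * u)⁻¹ ∂ν) (n : ℕ) :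
    ∫ a, f a ^ n ∂μ = ∫ a, f a ^ n ∂ν := by
  have hseries := ((hasFPowerSeriesAt_integral_inv_one_add_mul μ hf hf_le).congr h)
    |>.eq_formalMultilinearSeries (hasFPowerSeriesAt_integral_inv_one_add_mul ν hf hf_le)
  simpa using congr_arg (FormalMultilinearSeries.coeff · n) hseries

end StieltjesSeries

theorem inv_one_add_div_one_sub_mul_add {t u : ℝ} (hu : 1 + u ≠ 0) :
    (1 + u)⁻¹ / ((1 - t) * (1 + u)⁻¹ + t) = (1 + t * u)⁻¹ := by
  field_simp
  ring

theorem rep_function_injective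
    (μ₁ μ₂ : Measure (Set.Icc (0:ℝ) 1)) [IsFiniteMeasure μ₁] [IsFiniteMeasure μ₂]
    (h : ∀ x : ℝ, 0 < x →
      (∫ t : Set.Icc (0:ℝ) 1, x / ((1 - (t:ℝ)) * x + t) ∂μ₁) =
      ∫ t : Set.Icc (0:ℝ) 1, x / ((1 - (t:ℝ)) * x + t) ∂μ₂) :
    μ₁ = μ₂ := by
  have hval_le (t : Set.Icc (0:ℝ) 1) : |(t : ℝ)| ≤ 1 := abs_le.mpr ⟨by linarith [t.2.1], t.2.2⟩
  refine Measure.ext_of_forall_integral_pow_eq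
    (integral_pow_eq_of_integral_inv_one_add_mul_eq measurable_subtype_coe hval_le ?_)
  filter_upwards [Ioi_mem_nhds (show (-1 : ℝ) < 0 by norm_num)] with u hu
  have hu' : 0 < 1 + u := by linarith [Set.mem_Ioi.mp hu]
  simpa only [inv_one_add_div_one_sub_mul_add hu'.ne'] using h (1 + u)⁻¹ (inv_pos.mpr hu')
end

section
/- For 0 < α < 1 and x > 0, x^α = (sin(απ)/π) · ∫_0^1 (x/((1-t)x + t)) · t^{α-1}(1-t)^{-α} dt. That is, the associated measure of the α-weighted geometric mean has density (sin(απ)/π) · t^{α-1}(1-t)^{-α} with respect to Lebesgue measure on (0,1). -/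
/-!
The Möbius substitution `t = s / ((1 - s) x⁻¹ + s)` maps `(0, 1)` onto itself, has derivative
`x⁻¹ / ((1 - s) x⁻¹ + s)²`, and turns the integrand into `x ^ α * s ^ (α - 1) * (1 - s) ^ (-α)`.
What remains is the Beta integral `B(α, 1 - α) = Γ(α) Γ(1 - α) = π / sin (α π)`.
-/

open Real Set MeasureTheory

theorem integral_Ioo_rpow_mul_one_sub_rpow {a b : ℝ} (ha : 0 < a) (hb : 0 < b) :
    ∫ t in Ioo (0 : ℝ) 1, t ^ (a - 1) * (1 - t) ^ (b - 1) = Gamma a * Gamma b / Gamma (a + b) := by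
  apply Complex.ofReal_injective
  have hB := Complex.betaIntegral_eq_Gamma_mul_div a b (by simpa) (by simpa)
  push_cast [← Complex.Gamma_ofReal]
  rw [← hB, Complex.betaIntegral, intervalIntegral.integral_of_le zero_le_one,
    integral_Ioc_eq_integral_Ioo, ← integral_complex_ofReal]
  refine setIntegral_congr_fun measurableSet_Ioo fun t ht => ?_
  rw [Complex.ofReal_mul, Complex.ofReal_cpow ht.1.le, Complex.ofReal_cpow (sub_nonneg.2 ht.2.le)]
  push_cast
  rfl

noncomputable def unitMobius (y t : ℝ) : ℝ := t / ((1 - t) * y + t)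

section
variable {y t : ℝ}

theorem unitMobius_denom_pos (hy : 0 < y) (ht : t ∈ Icc (0 : ℝ) 1) : 0 < (1 - t) * y + t := by
  rcases ht with ⟨h0, h1⟩
  rcases h0.eq_or_lt with rfl | h0
  · simpa using hy
  · nlinarith

theorem unitMobius_mem_Ioo (hy : 0 < y) (ht : t ∈ Ioo (0 : ℝ) 1) : unitMobius y t ∈ Ioo 0 1 := by
  have hD := unitMobius_denom_pos hy (Ioo_subset_Icc_self ht)
  refine ⟨div_pos ht.1 hD, (div_lt_one hD).2 ?_⟩
  nlinarith [ht.2]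

theorem one_sub_unitMobius (hy : 0 < y) (ht : t ∈ Icc (0 : ℝ) 1) :
    1 - unitMobius y t = (1 - t) * y / ((1 - t) * y + t) := by
  have hD := (unitMobius_denom_pos hy ht).ne'
  rw [unitMobius, eq_div_iff hD, sub_mul, div_mul_cancel₀ _ hD]
  ring

theorem unitMobius_inv_unitMobius (hy : 0 < y) (ht : t ∈ Icc (0 : ℝ) 1) :
    unitMobius y⁻¹ (unitMobius y t) = t := by
  have hD := (unitMobius_denom_pos hy ht).ne'
  rw [unitMobius, one_sub_unitMobius hy ht, unitMobius]
  field_simp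
  ring

theorem image_unitMobius_Ioo (hy : 0 < y) : unitMobius y '' Ioo 0 1 = Ioo 0 1 := by
  refine Subset.antisymm (fun _ ⟨t, ht, hu⟩ => hu ▸ unitMobius_mem_Ioo hy ht) fun t ht => ?_
  refine ⟨unitMobius y⁻¹ t, unitMobius_mem_Ioo (inv_pos.2 hy) ht, ?_⟩
  simpa using unitMobius_inv_unitMobius (inv_pos.2 hy) (Ioo_subset_Icc_self ht)

theorem injOn_unitMobius (hy : 0 < y) : InjOn (unitMobius y) (Ioo 0 1) :=
  LeftInvOn.injOn (f₁' := unitMobius y⁻¹) fun _ ht =>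
    unitMobius_inv_unitMobius hy (Ioo_subset_Icc_self ht)

theorem hasDerivAt_unitMobius (hy : 0 < y) (ht : t ∈ Icc (0 : ℝ) 1) :
    HasDerivAt (unitMobius y) (y / ((1 - t) * y + t) ^ 2) t := by
  have hD := (unitMobius_denom_pos hy ht).ne'
  have hden : HasDerivAt (fun t => (1 - t) * y + t) (1 - y) t :=
    ((((hasDerivAt_id' t).const_sub 1).mul_const y).fun_add (hasDerivAt_id' t)).congr_deriv
      (by ring)
  exact ((hasDerivAt_id' t).fun_div hden hD).congr_deriv (by ring)

end

theorem abs_deriv_unitMobius_inv_mul_harmonic_weight {x s : ℝ} (hx : 0 < x) (hs : s ∈ Ioo (0 : ℝ) 1)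
    (α : ℝ) :
    |x⁻¹ / ((1 - s) * x⁻¹ + s) ^ 2| *
      (x / ((1 - unitMobius x⁻¹ s) * x + unitMobius x⁻¹ s) * unitMobius x⁻¹ s ^ (α - 1) *
        (1 - unitMobius x⁻¹ s) ^ (-α)) = x ^ α * (s ^ (α - 1) * (1 - s) ^ (-α)) := by
  have hs' := Ioo_subset_Icc_self hs
  set D := (1 - s) * x⁻¹ + s
  have hD : 0 < D := unitMobius_denom_pos (inv_pos.2 hx) hs'
  have h1s : 0 < 1 - s := sub_pos.2 hs.2
  have hu : unitMobius x⁻¹ s = s / D := rfl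
  have h1u : 1 - unitMobius x⁻¹ s = (1 - s) * x⁻¹ / D := one_sub_unitMobius (inv_pos.2 hx) hs'
  have hharm : (1 - unitMobius x⁻¹ s) * x + unitMobius x⁻¹ s = D⁻¹ := by
    rw [h1u, hu]
    field_simp
    ring
  rw [hharm, h1u, hu, abs_of_pos (by positivity), div_rpow hs.1.le hD.le,
    div_rpow (by positivity) hD.le, mul_rpow h1s.le (by positivity), inv_rpow hx.le,
    rpow_neg hx.le, inv_inv, rpow_sub_one hD.ne', rpow_neg hD.le]
  field_simp

theorem setIntegral_Ioo_harmonic_mul_weight {x : ℝ} (hx : 0 < x) (α : ℝ) :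
    ∫ t in Ioo (0 : ℝ) 1, x / ((1 - t) * x + t) * t ^ (α - 1) * (1 - t) ^ (-α) =
      x ^ α * ∫ t in Ioo (0 : ℝ) 1, t ^ (α - 1) * (1 - t) ^ (-α) := by
  have hy : 0 < x⁻¹ := inv_pos.2 hx
  conv_lhs => rw [← image_unitMobius_Ioo hy]
  rw [integral_image_eq_integral_abs_deriv_smul measurableSet_Ioo
    (fun s hs => (hasDerivAt_unitMobius hy (Ioo_subset_Icc_self hs)).hasDerivWithinAt)
    (injOn_unitMobius hy), ← integral_const_mul]
  exact setIntegral_congr_fun measurableSet_Ioo fun s hs =>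
    abs_deriv_unitMobius_inv_mul_harmonic_weight hx hs α

theorem weighted_geometric_mean_integral_rep (α : ℝ) (hα : α ∈ Set.Ioo (0:ℝ) 1)
    (x : ℝ) (hx : 0 < x) :
    x ^ α = Real.sin (α * π) / π *
      ∫ t in (0:ℝ)..1, (x / ((1 - t) * x + t)) * t ^ (α - 1) * (1 - t) ^ (-α) := by
  have hbeta : ∫ t in Ioo (0 : ℝ) 1, t ^ (α - 1) * (1 - t) ^ (-α) = π / sin (α * π) := by
    have h := integral_Ioo_rpow_mul_one_sub_rpow hα.1 (sub_pos.2 hα.2)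
    rwa [sub_sub_cancel_left, add_sub_cancel, Gamma_one, div_one, Gamma_mul_Gamma_one_sub,
      mul_comm π] at h
  have hsin : sin (α * π) ≠ 0 :=
    (sin_pos_of_pos_of_lt_pi (by nlinarith [pi_pos, hα.1]) (by nlinarith [pi_pos, hα.2])).ne'
  rw [intervalIntegral.integral_of_le zero_le_one, integral_Ioc_eq_integral_Ioo,
    setIntegral_Ioo_harmonic_mul_weight hx, hbeta]
  field_simp
end

section
/- For every λ ∈ (0,1), ∫_0^1 (sin(λπ)/π) · t^{λ-1}(1-t)^{-λ} dt = 1; equivalently, g(t) = ∫_0^1 (sin(λπ)/π) · t^{λ-1}(1-t)^{-λ} dλ = 1/( t(1-t)(π² + (log(t/(1-t)))²) ) for t ∈ (0,1). -/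
open Real

/-! For fixed `λ` the integral in `t` is the Beta integral `B(λ, 1 - λ) = Γ(λ) Γ(1 - λ)`, which
Euler's reflection formula evaluates to `π / sin (π λ)`. For fixed `t`, writing
`a = log (t / (1 - t))` turns `t ^ (λ - 1) (1 - t) ^ (-λ)` into `e ^ (a λ) / t`, and
`∫₀¹ e ^ (a λ) sin (π λ) dλ = π (1 + e ^ a) / (a ^ 2 + π ^ 2)` with `1 + e ^ a = 1 / (1 - t)`. -/

theorem integral_rpow_sub_one_mul_one_sub_rpow_sub_one {u v : ℝ} (hu : 0 < u) (hv : 0 < v) :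
    ∫ x in (0:ℝ)..1, x ^ (u - 1) * (1 - x) ^ (v - 1) = Gamma u * Gamma v / Gamma (u + v) := by
  have hβ := Complex.Gamma_mul_Gamma_eq_betaIntegral (s := u) (t := v)
    (by simpa using hu) (by simpa using hv)
  rw [eq_div_iff (Gamma_pos_of_pos (add_pos hu hv)).ne', ← Complex.ofReal_inj]
  push_cast
  simp only [← Complex.Gamma_ofReal, Complex.ofReal_add]
  rw [hβ, mul_comm, Complex.betaIntegral, ← intervalIntegral.integral_ofReal]
  congr 1
  refine intervalIntegral.integral_congr fun x hx => ?_
  rw [Set.uIcc_of_le zero_le_one] at hx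
  push_cast
  rw [Complex.ofReal_cpow hx.1, Complex.ofReal_cpow (sub_nonneg.mpr hx.2)]
  push_cast
  ring_nf

theorem integral_rpow_sub_one_mul_one_sub_rpow_neg {l : ℝ} (hl : l ∈ Set.Ioo (0:ℝ) 1) :
    ∫ x in (0:ℝ)..1, x ^ (l - 1) * (1 - x) ^ (-l) = π / sin (π * l) := by
  have h := integral_rpow_sub_one_mul_one_sub_rpow_sub_one hl.1 (sub_pos.mpr hl.2)
  rw [sub_sub_cancel_left, add_sub_cancel, Gamma_one, div_one, Gamma_mul_Gamma_one_sub] at h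
  exact h

theorem hasDerivAt_exp_mul_sin_antideriv {a b : ℝ} (hab : a ^ 2 + b ^ 2 ≠ 0) (x : ℝ) :
    HasDerivAt (fun y => exp (a * y) * (a * sin (b * y) - b * cos (b * y)) / (a ^ 2 + b ^ 2))
      (exp (a * x) * sin (b * x)) x := by
  have hlin (c : ℝ) : HasDerivAt (fun y => c * y) c x := by
    simpa using (hasDerivAt_id' x).const_mul c
  refine (((hlin a).exp.fun_mul (((hlin b).sin.const_mul a).fun_sub
    ((hlin b).cos.const_mul b))).div_const (a ^ 2 + b ^ 2)).congr_deriv ?_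
  field_simp
  ring

theorem integral_exp_mul_sin_pi_mul (a : ℝ) :
    ∫ x in (0:ℝ)..1, exp (a * x) * sin (π * x) = π * (1 + exp a) / (a ^ 2 + π ^ 2) := by
  have hD : a ^ 2 + π ^ 2 ≠ 0 := by positivity
  have hcont : Continuous fun x => exp (a * x) * sin (π * x) := by fun_prop
  rw [intervalIntegral.integral_eq_sub_of_hasDerivAt
    (fun x _ => hasDerivAt_exp_mul_sin_antideriv hD x) (hcont.intervalIntegrable 0 1)]
  simp only [mul_one, mul_zero, exp_zero, sin_pi, cos_pi, sin_zero, cos_zero]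
  field_simp
  ring

theorem rpow_sub_one_mul_one_sub_rpow_neg {t : ℝ} (ht : t ∈ Set.Ioo (0:ℝ) 1) (l : ℝ) :
    t ^ (l - 1) * (1 - t) ^ (-l) = exp (log (t / (1 - t)) * l) / t := by
  have ht' : 0 < 1 - t := sub_pos.mpr ht.2
  rw [rpow_sub ht.1, rpow_one, rpow_neg ht'.le, div_mul_eq_mul_div, ← div_eq_mul_inv,
    ← div_rpow ht.1.le ht'.le, rpow_def_of_pos (div_pos ht.1 ht')]

theorem geometric_density_normalized_and_integrated :
    (∀ l ∈ Set.Ioo (0:ℝ) 1,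
      (∫ t in (0:ℝ)..1, Real.sin (l * π) / π * t ^ (l - 1) * (1 - t) ^ (-l)) = 1) ∧
    (∀ t ∈ Set.Ioo (0:ℝ) 1,
      (∫ l in (0:ℝ)..1, Real.sin (l * π) / π * t ^ (l - 1) * (1 - t) ^ (-l)) =
        1 / (t * (1 - t) * (π ^ 2 + (Real.log (t / (1 - t))) ^ 2))) := by
  constructor
  · intro l hl
    have hsin : sin (π * l) ≠ 0 :=
      (sin_pos_of_pos_of_lt_pi (mul_pos pi_pos hl.1) (by nlinarith [pi_pos, hl.2])).ne'
    simp_rw [mul_assoc, intervalIntegral.integral_const_mul,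
      integral_rpow_sub_one_mul_one_sub_rpow_neg hl, mul_comm l π]
    field_simp
  · intro t ht
    have hratio : 0 < t / (1 - t) := div_pos ht.1 (sub_pos.mpr ht.2)
    have hintegrand (l : ℝ) : sin (l * π) / π * t ^ (l - 1) * (1 - t) ^ (-l) =
        (π * t)⁻¹ * (exp (log (t / (1 - t)) * l) * sin (π * l)) := by
      rw [mul_assoc, rpow_sub_one_mul_one_sub_rpow_neg ht, mul_comm l π]
      ring
    simp_rw [hintegrand, intervalIntegral.integral_const_mul, integral_exp_mul_sin_pi_mul,
      exp_log hratio]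
    have ht0 : t ≠ 0 := ht.1.ne'
    have ht1 : 1 - t ≠ 0 := (sub_pos.mpr ht.2).ne'
    field_simp
    ring
end

section
/- A finite Borel measure μ on [0,1] satisfies ∫ x/((1-t)x+t) dμ(t) = x · ∫ (1/x)/((1-t)(1/x)+t) dμ(t) for all x > 0 (i.e., the represented function f satisfies f(x) = x f(1/x), so the corresponding connection is symmetric) if and only if μ is invariant under t ↦ 1-t. -/
open MeasureTheory

def Theta : Set.Icc (0:ℝ) 1 → Set.Icc (0:ℝ) 1 :=
  fun t => ⟨1 - (t:ℝ), ⟨by linarith [t.2.2], by linarith [t.2.1]⟩⟩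

/-!
Changing variables by `Θ` turns `x f_μ(1/x)` into `f_{Θ_* μ}(x)`, so the condition says that `μ`
and `Θ_* μ` have the same representing function. Substituting `x = (1 + u)⁻¹` gives
`f_ρ(x) = ∫ (1 + u t)⁻¹ dρ(t) = ∑ (-u)ⁿ ∫ tⁿ dρ(t)` for `|u| < 1`, so by uniqueness of power
series coefficients the two measures have the same moments; by Weierstrass approximation, a
finite measure on a compact subset of `ℝ` is determined by its moments.
-/

open Set Polynomial FormalMultilinearSeries unitInterval

theorem Continuous.integrable_of_compactSpace {X E : Type*} [TopologicalSpace X] [CompactSpace X]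
    [MeasurableSpace X] [OpensMeasurableSpace X] [NormedAddCommGroup E] {μ : Measure X}
    [IsFiniteMeasure μ] {f : X → E} (hf : Continuous f) : Integrable f μ :=
  hf.integrable_of_hasCompactSupport (.of_compactSpace f)

theorem ContinuousMap.continuous_integral {X : Type*} [TopologicalSpace X] [CompactSpace X]
    [MeasurableSpace X] [OpensMeasurableSpace X] (μ : Measure X) [IsFiniteMeasure μ] :
    Continuous fun f : C(X, ℝ) => ∫ x, f x ∂μ := by
  refine (LipschitzWith.of_dist_le_mul (K := ⟨μ.real univ, measureReal_nonneg⟩)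
    fun f g => ?_).continuous
  rw [dist_eq_norm, dist_eq_norm, ← integral_sub f.continuous.integrable_of_compactSpace
    g.continuous.integrable_of_compactSpace, mul_comm]
  exact norm_integral_le_of_norm_le_const (.of_forall fun x => (f - g).norm_coe_le_norm x)

theorem MeasureTheory.ext_of_forall_integral_pow_eq {s : Set ℝ} [CompactSpace s]
    {μ ν : Measure s} [IsFiniteMeasure μ] [IsFiniteMeasure ν]
    (h : ∀ n : ℕ, ∫ t, (t : ℝ) ^ n ∂μ = ∫ t, (t : ℝ) ^ n ∂ν) : μ = ν := by
  have hpoly (p : ℝ[X]) : ∫ t, p.eval (t : ℝ) ∂μ = ∫ t, p.eval (t : ℝ) ∂ν := by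
    induction p using Polynomial.induction_on' with
    | add p q hp hq =>
      simp only [eval_add]
      rw [integral_add, integral_add, hp, hq] <;>
        exact Continuous.integrable_of_compactSpace (by fun_prop)
    | monomial n a =>
      simp only [eval_monomial]
      rw [integral_const_mul, integral_const_mul, h n]
  let S : Set C(s, ℝ) := {f | ∫ t, f t ∂μ = ∫ t, f t ∂ν}
  have hS : IsClosed S :=
    isClosed_eq (ContinuousMap.continuous_integral μ) (ContinuousMap.continuous_integral ν)
  have hpolyS : (polynomialFunctions s : Set C(s, ℝ)) ⊆ S := by
    rintro _ ⟨p, -, rfl⟩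
    exact hpoly p
  have hclosure : closure (polynomialFunctions s : Set C(s, ℝ)) ⊆ S := closure_minimal hpolyS hS
  rw [← Subalgebra.topologicalClosure_coe, polynomialFunctions.topologicalClosure,
    Algebra.coe_top] at hclosure
  exact ext_of_forall_integral_eq_of_IsFiniteMeasure fun f =>
    hclosure (mem_univ f.toContinuousMap)

section Moments

variable (ρ : Measure I) [IsFiniteMeasure ρ]

theorem hasSum_integral_inv_one_add_mul {u : ℝ} (hu : |u| < 1) :
    HasSum (fun n : ℕ => (-u) ^ n * ∫ t, (t : ℝ) ^ n ∂ρ) (∫ t, (1 + u * t)⁻¹ ∂ρ) := by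
  have hbound (n : ℕ) (t : I) : ‖(-u * t) ^ n‖ ≤ |u| ^ n := by
    rw [norm_pow, Real.norm_eq_abs, abs_mul, abs_neg, abs_of_nonneg t.2.1]
    exact pow_le_pow_left₀ (mul_nonneg (abs_nonneg u) t.2.1)
      (mul_le_of_le_one_right (abs_nonneg u) t.2.2) n
  have hgeom (t : I) : HasSum (fun n : ℕ => (-u * t) ^ n) (1 + u * t)⁻¹ := by
    have := hasSum_geometric_of_abs_lt_one
      (by simpa using (hbound 1 t).trans_lt (by simpa using hu) : |-u * t| < 1)
    simpa only [neg_mul, sub_neg_eq_add] using this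
  have hsummable : Summable fun n : ℕ => ∫ t, ‖(-u * (t : ℝ)) ^ n‖ ∂ρ := by
    refine .of_nonneg_of_le (fun n => integral_nonneg fun t => norm_nonneg _) (fun n => ?_)
      ((summable_geometric_of_lt_one (abs_nonneg u) hu).mul_right (ρ.real univ))
    refine (le_abs_self _).trans ?_
    rw [← Real.norm_eq_abs]
    exact norm_integral_le_of_norm_le_const
      (.of_forall fun t => (norm_norm _).trans_le (hbound n t))
  have := hasSum_integral_of_summable_integral_norm
    (fun n => Continuous.integrable_of_compactSpace (by fun_prop)) hsummable
  rw [integral_congr_ae (.of_forall fun t => (hgeom t).tsum_eq)] at this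
  simpa only [mul_pow, integral_const_mul] using this

theorem hasFPowerSeriesOnBall_integral_inv_one_add_mul :
    HasFPowerSeriesOnBall (fun u : ℝ => ∫ t, (1 + u * t)⁻¹ ∂ρ)
      (ofScalars ℝ fun n => (-1) ^ n * ∫ t, (t : ℝ) ^ n ∂ρ) 0 1 where
  r_le := by
    refine le_radius_of_bound _ (ρ.real univ) fun n => ?_
    rw [ofScalars_norm, NNReal.coe_one, one_pow, mul_one, norm_mul, norm_pow, norm_neg,
      norm_one, one_pow, one_mul]
    refine norm_integral_le_of_norm_le_const (.of_forall fun t => ?_) |>.trans_eq (one_mul _)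
    rw [norm_pow, Real.norm_eq_abs, abs_of_nonneg t.2.1]
    exact pow_le_one₀ t.2.1 t.2.2
  r_pos := one_pos
  hasSum {u} hu := by
    have hu : |u| < 1 := by simpa [← ofReal_norm] using hu
    simpa only [zero_add, ofScalars_apply_eq, smul_eq_mul, neg_pow u, mul_right_comm]
      using hasSum_integral_inv_one_add_mul ρ hu

end Moments

theorem integral_pow_eq_of_forall_integral_inv_one_add_mul_eq {μ ν : Measure I}
    [IsFiniteMeasure μ] [IsFiniteMeasure ν]
    (h : ∀ u : ℝ, |u| < 1 → ∫ t, (1 + u * t)⁻¹ ∂μ = ∫ t, (1 + u * t)⁻¹ ∂ν) (n : ℕ) :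
    ∫ t, (t : ℝ) ^ n ∂μ = ∫ t, (t : ℝ) ^ n ∂ν := by
  have hseries := (hasFPowerSeriesOnBall_integral_inv_one_add_mul μ).hasFPowerSeriesAt
    |>.eq_formalMultilinearSeries_of_eventually
      (hasFPowerSeriesOnBall_integral_inv_one_add_mul ν).hasFPowerSeriesAt
      (Filter.mem_of_superset (Metric.ball_mem_nhds 0 one_pos) fun u hu =>
        h u (by simpa using hu))
  simpa using congrFun (ofScalars_series_injective ℝ ℝ hseries) n

noncomputable def representingFun (ρ : Measure I) (x : ℝ) : ℝ :=
  ∫ t, x / ((1 - (t : ℝ)) * x + t) ∂ρ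

theorem representingFun_eq_integral_inv_one_add_mul (ρ : Measure I) {x : ℝ} (hx : x ≠ 0) :
    representingFun ρ x = ∫ t, (1 + (x⁻¹ - 1) * t)⁻¹ ∂ρ := by
  refine integral_congr_ae (.of_forall fun t => ?_)
  change x / _ = _
  rw [← inv_div]
  congr 1
  field_simp
  ring

theorem eq_of_forall_representingFun_eq {μ ν : Measure I} [IsFiniteMeasure μ] [IsFiniteMeasure ν]
    (h : ∀ x : ℝ, 0 < x → representingFun μ x = representingFun ν x) : μ = ν := by
  refine ext_of_forall_integral_pow_eq
    (integral_pow_eq_of_forall_integral_inv_one_add_mul_eq fun u hu => ?_)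
  have hx : 0 < (1 + u)⁻¹ := inv_pos.mpr (by linarith [neg_abs_le u])
  simpa [representingFun_eq_integral_inv_one_add_mul _ hx.ne'] using h _ hx

theorem measurableEmbedding_Theta : MeasurableEmbedding Theta :=
  symmHomeomorph.measurableEmbedding

theorem representingFun_map_Theta (ρ : Measure I) {x : ℝ} (hx : 0 < x) :
    representingFun (ρ.map Theta) x = x * representingFun ρ (1 / x) := by
  rw [representingFun, representingFun, measurableEmbedding_Theta.integral_map,
    ← integral_const_mul]
  refine integral_congr_ae (.of_forall fun t => ?_)
  obtain ⟨ht0, ht1⟩ := t.2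
  have hden : 0 < (1 - (t : ℝ)) + t * x := by
    nlinarith [mul_nonneg (sub_nonneg.2 ht1) hx.le, mul_nonneg ht0 hx.le]
  simp only [Theta]
  field_simp
  ring

theorem symmetric_connection_iff_symmetric_measure
    (μ : Measure (Set.Icc (0:ℝ) 1)) [IsFiniteMeasure μ] :
    (∀ x : ℝ, 0 < x →
      (∫ t : Set.Icc (0:ℝ) 1, x / ((1 - (t:ℝ)) * x + t) ∂μ) =
        x * ∫ t : Set.Icc (0:ℝ) 1, (1 / x) / ((1 - (t:ℝ)) * (1 / x) + t) ∂μ) ↔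
    μ.map Theta = μ := by
  constructor
  · intro h
    refine (eq_of_forall_representingFun_eq fun x hx => ?_).symm
    exact (h x hx).trans (representingFun_map_Theta μ hx).symm
  · intro h x hx
    change representingFun μ x = x * representingFun μ (1 / x)
    rw [← representingFun_map_Theta μ hx, h]
end
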